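/- Let M ≥ 2, N ≥ 2 and Γ = (N−1)(M−1). Then lim_{m→∞} ((M−1)(m+1)^Γ − ((m+1)^Γ − m^Γ)) / ((N(m+1)^Γ + (M−1)m^Γ)(M−1)) = 1/(M+N−1), and the same limit holds with (m+1)^Γ replaced by m^Γ in the first term. -/
import Mathlib

open Filter

lemma sdof_aux (Γ : ℕ) (a b c d e : ℝ) (hcd : c + d ≠ 0) (he : e ≠ 0) :
    Tendsto (fun m : ℕ =>
        (a * (m + 1 : ℝ) ^ Γ + b * (m : ℝ) ^ Γ) /
          ((c * (m + 1 : ℝ) ^ Γ + d * (m : ℝ) ^ Γ) * e))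
      atTop (nhds ((a + b) / ((c + d) * e))) := by
  have h0 : Tendsto (fun m : ℕ => 1 / (m : ℝ)) atTop (nhds 0) :=
    tendsto_one_div_atTop_nhds_zero_nat
  have hr : Tendsto (fun m : ℕ => (1 + 1 / (m : ℝ)) ^ Γ) atTop (nhds 1) := by
    have := ((tendsto_const_nhds (x := (1:ℝ))).add h0).pow Γ
    simpa using this
  have hg : Tendsto (fun m : ℕ =>
      (a * (1 + 1 / (m : ℝ)) ^ Γ + b) / ((c * (1 + 1 / (m : ℝ)) ^ Γ + d) * e))
      atTop (nhds ((a + b) / ((c + d) * e))) := by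
    have hnum : Tendsto (fun m : ℕ => a * (1 + 1 / (m : ℝ)) ^ Γ + b) atTop (nhds (a + b)) := by
      simpa using (hr.const_mul a).add tendsto_const_nhds
    have hden : Tendsto (fun m : ℕ => (c * (1 + 1 / (m : ℝ)) ^ Γ + d) * e) atTop
        (nhds ((c + d) * e)) := by
      have : Tendsto (fun m : ℕ => c * (1 + 1 / (m : ℝ)) ^ Γ + d) atTop (nhds (c + d)) := by
        simpa using (hr.const_mul c).add tendsto_const_nhds
      simpa using this.mul_const e
    exact hnum.div hden (mul_ne_zero hcd he)
  refine hg.congr' ?_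
  filter_upwards [eventually_ge_atTop 1] with m hm
  have hm0 : (0 : ℝ) < (m : ℝ) := by exact_mod_cast hm
  have key : ((m : ℝ) + 1) ^ Γ = (1 + 1 / (m : ℝ)) ^ Γ * (m : ℝ) ^ Γ := by
    rw [← mul_pow]
    congr 1
    field_simp
  have hmΓ : (m : ℝ) ^ Γ ≠ 0 := pow_ne_zero _ hm0.ne'
  rw [key]
  rw [show a * ((1 + 1 / (m : ℝ)) ^ Γ * (m : ℝ) ^ Γ) + b * (m : ℝ) ^ Γ
      = (a * (1 + 1 / (m : ℝ)) ^ Γ + b) * (m : ℝ) ^ Γ by ring,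
    show (c * ((1 + 1 / (m : ℝ)) ^ Γ * (m : ℝ) ^ Γ) + d * (m : ℝ) ^ Γ) * e
      = ((c * (1 + 1 / (m : ℝ)) ^ Γ + d) * e) * (m : ℝ) ^ Γ by ring,
    mul_div_mul_right _ _ hmΓ]

/-- Secure degrees of freedom under secrecy constraint 2: with `Γ = (N-1)(M-1)` and
`F(m) = N(m+1)^Γ + (M-1)m^Γ`, both
`((M-1)(m+1)^Γ - ((m+1)^Γ - m^Γ)) / (F(m)(M-1)) → 1/(M+N-1)` and
`((M-1)m^Γ - ((m+1)^Γ - m^Γ)) / (F(m)(M-1)) → 1/(M+N-1)` as `m → ∞`. -/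
theorem sdof_constraint2 (M N : ℕ) (hM : 2 ≤ M) (hN : 2 ≤ N) :
    Tendsto (fun m : ℕ =>
        (((M : ℝ) - 1) * (m + 1 : ℝ) ^ ((N - 1) * (M - 1)) -
            ((m + 1 : ℝ) ^ ((N - 1) * (M - 1)) - (m : ℝ) ^ ((N - 1) * (M - 1)))) /
          (((N : ℝ) * (m + 1 : ℝ) ^ ((N - 1) * (M - 1)) +
              ((M : ℝ) - 1) * (m : ℝ) ^ ((N - 1) * (M - 1))) * ((M : ℝ) - 1)))
      atTop (nhds (1 / ((M : ℝ) + (N : ℝ) - 1))) ∧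
    Tendsto (fun m : ℕ =>
        (((M : ℝ) - 1) * (m : ℝ) ^ ((N - 1) * (M - 1)) -
            ((m + 1 : ℝ) ^ ((N - 1) * (M - 1)) - (m : ℝ) ^ ((N - 1) * (M - 1)))) /
          (((N : ℝ) * (m + 1 : ℝ) ^ ((N - 1) * (M - 1)) +
              ((M : ℝ) - 1) * (m : ℝ) ^ ((N - 1) * (M - 1))) * ((M : ℝ) - 1)))
      atTop (nhds (1 / ((M : ℝ) + (N : ℝ) - 1))) := by
  have hM1 : (1 : ℝ) < (M : ℝ) := by exact_mod_cast lt_of_lt_of_le one_lt_two hM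
  have hN1 : (1 : ℝ) < (N : ℝ) := by exact_mod_cast lt_of_lt_of_le one_lt_two hN
  have hcd : (N : ℝ) + ((M : ℝ) - 1) ≠ 0 := by nlinarith
  have he : (M : ℝ) - 1 ≠ 0 := by nlinarith
  have hMN : (M : ℝ) + (N : ℝ) - 1 ≠ 0 := by nlinarith
  have hlim : (((M : ℝ) - 2) + 1) / (((N : ℝ) + ((M : ℝ) - 1)) * ((M : ℝ) - 1))
      = 1 / ((M : ℝ) + (N : ℝ) - 1) := by
    rw [div_eq_div_iff (by nlinarith) (by nlinarith)]
    ring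
  have hlim2 : ((-1 : ℝ) + (M : ℝ)) / (((N : ℝ) + ((M : ℝ) - 1)) * ((M : ℝ) - 1))
      = 1 / ((M : ℝ) + (N : ℝ) - 1) := by
    rw [div_eq_div_iff (by nlinarith) (by nlinarith)]
    ring
  constructor
  · have := sdof_aux ((N - 1) * (M - 1)) ((M : ℝ) - 2) 1 (N : ℝ) ((M : ℝ) - 1)
      ((M : ℝ) - 1) hcd he
    rw [hlim] at this
    refine this.congr fun m => ?_
    ring_nf
  · have := sdof_aux ((N - 1) * (M - 1)) (-1 : ℝ) (M : ℝ) (N : ℝ) ((M : ℝ) - 1)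
      ((M : ℝ) - 1) hcd he
    rw [hlim2] at this
    refine this.congr fun m => ?_
    ring_nf
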